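/- arXiv:2511.15623 — 4 statements merged into one kernel-verified Lean document; each statement's English description precedes it below -/
import Mathlib

section
/- With the relation extensions P₁, …, P_k pairwise disjoint, the repair core equals the intersection of the complements of the participating-tuple sets: Core(D) = ⋂_{i=1}^{k} (D ∖ Rᵢ). -/
open Classical

variable {α : Type*} [DecidableEq α] {k : ℕ}

/-- The database: the union of the relation extensions `P 1, …, P k`. -/
def DB (P : Fin k → Finset α) : Finset α :=
  Finset.univ.biUnion P

/-- A subset `D'` satisfies the query: there is a witness `f` with
`f i ∈ Pᵢ ∩ D'` for every atom `i`, jointly satisfying the join conditions `W`. -/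
def Sat (P : Fin k → Finset α) (W : (Fin k → α) → Prop) (D' : Finset α) : Prop :=
  ∃ f : Fin k → α, (∀ i, f i ∈ P i ∩ D') ∧ W f

/-- `D'` is an S-repair of the database w.r.t. the denial constraint `¬Q`:
a subset-maximal subset not satisfying the query. -/
def IsSRepair (P : Fin k → Finset α) (W : (Fin k → α) → Prop) (D' : Finset α) : Prop :=
  D' ⊆ DB P ∧ ¬ Sat P W D' ∧ ∀ D'', D'' ⊆ DB P → D' ⊂ D'' → Sat P W D''

/-- The repair core: the intersection of all S-repairs of the database. -/
noncomputable def Core (P : Fin k → Finset α) (W : (Fin k → α) → Prop) : Finset α :=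
  (DB P).filter (fun t => ∀ D', IsSRepair P W D' → t ∈ D')

/-- `Rᵢ`: the tuples of `Pᵢ` participating in some witness of the query. -/
noncomputable def Rset (P : Fin k → Finset α) (W : (Fin k → α) → Prop) (i : Fin k) :
    Finset α :=
  (P i).filter (fun t => ∃ f : Fin k → α, f i = t ∧ (∀ j, f j ∈ P j) ∧ W f)

/-- `S` is a sufficient-set: `S ⊆ D` and `sat(S)`. -/
def SuffSet (P : Fin k → Finset α) (W : (Fin k → α) → Prop) (S : Finset α) : Prop :=
  S ⊆ DB P ∧ Sat P W S

/-- Minimal sufficient-set (MSS). -/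
def MSSuff (P : Fin k → Finset α) (W : (Fin k → α) → Prop) (S : Finset α) : Prop :=
  SuffSet P W S ∧ ∀ S' ⊂ S, ¬ SuffSet P W S'

/-- `N` is a necessary-set: `N ⊆ D` and `¬ sat(D ∖ N)`. -/
def NecSet (P : Fin k → Finset α) (W : (Fin k → α) → Prop) (N : Finset α) : Prop :=
  N ⊆ DB P ∧ ¬ Sat P W (DB P \ N)

/-- Minimal necessary-set (MNS). -/
def MNS (P : Fin k → Finset α) (W : (Fin k → α) → Prop) (N : Finset α) : Prop :=
  NecSet P W N ∧ ∀ N' ⊂ N, ¬ NecSet P W N'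

/-! Since the relations are pairwise disjoint, a tuple `t ∈ Rᵢ` occurs in a witness `f` only at
position `i`, so the other tuples of `f` form a non-satisfying set; a repair extending it must
omit `t`. Conversely, a tuple outside every `Rᵢ` occurs in no witness, so adding it to a repair
cannot make the repair satisfy the query, and maximality forces it into every repair. -/

open Function

theorem exists_isSRepair_superset (P : Fin k → Finset α) (W : (Fin k → α) → Prop)
    {X : Finset α} (hX : X ⊆ DB P) (hXsat : ¬ Sat P W X) :
    ∃ D', IsSRepair P W D' ∧ X ⊆ D' := by
  let s := (DB P).powerset.filter fun D' => X ⊆ D' ∧ ¬ Sat P W D'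
  have hXs : X ∈ s := by simp [s, hX, hXsat]
  obtain ⟨D', hD's, hmax⟩ := s.exists_maximal ⟨X, hXs⟩
  simp only [s, Finset.mem_filter, Finset.mem_powerset] at hD's
  obtain ⟨hD'DB, hXD', hD'sat⟩ := hD's
  refine ⟨D', ⟨hD'DB, hD'sat, fun D'' hD''DB hlt => ?_⟩, hXD'⟩
  by_contra hD''sat
  have hD''s : D'' ∈ s := by simp [s, hD''DB, hXD'.trans hlt.subset, hD''sat]
  exact hlt.not_ge (hmax hD''s hlt.le)

theorem not_sat_erase_image {P : Fin k → Finset α} (hdisj : Pairwise (Disjoint on P))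
    (W : (Fin k → α) → Prop) {f : Fin k → α} (hf : ∀ j, f j ∈ P j) (i : Fin k) :
    ¬ Sat P W ((Finset.univ.image f).erase (f i)) := by
  rintro ⟨g, hg, -⟩
  obtain ⟨hgP, hgX⟩ := Finset.mem_inter.mp (hg i)
  obtain ⟨hne, j, -, hfj⟩ := by simpa only [Finset.mem_erase, Finset.mem_image] using hgX
  have hji : j ≠ i := by rintro rfl; exact hne hfj.symm
  exact Finset.disjoint_left.mp (hdisj hji) (hf j) (hfj ▸ hgP)

theorem exists_isSRepair_not_mem_of_mem_Rset {P : Fin k → Finset α}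
    (hdisj : Pairwise (Disjoint on P)) {W : (Fin k → α) → Prop} {i : Fin k} {t : α}
    (ht : t ∈ Rset P W i) : ∃ D', IsSRepair P W D' ∧ t ∉ D' := by
  obtain ⟨-, f, rfl, hf, hW⟩ := Finset.mem_filter.mp ht
  have hX : (Finset.univ.image f).erase (f i) ⊆ DB P := by
    intro x hx
    obtain ⟨j, -, rfl⟩ := Finset.mem_image.mp (Finset.mem_of_mem_erase hx)
    exact Finset.mem_biUnion.mpr ⟨j, Finset.mem_univ j, hf j⟩
  obtain ⟨D', hD', hXD'⟩ :=
    exists_isSRepair_superset P W hX (not_sat_erase_image hdisj W hf i)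
  refine ⟨D', hD', fun hfi => hD'.2.1 ⟨f, fun j => Finset.mem_inter.mpr ⟨hf j, ?_⟩, hW⟩⟩
  by_cases hji : f j = f i
  · exact hji ▸ hfi
  · exact hXD' (Finset.mem_erase.mpr ⟨hji, Finset.mem_image_of_mem f (Finset.mem_univ j)⟩)

theorem sat_of_sat_insert {P : Fin k → Finset α} {W : (Fin k → α) → Prop} {D : Finset α}
    {t : α} (ht : ∀ i, t ∉ Rset P W i) (hsat : Sat P W (insert t D)) : Sat P W D := by
  obtain ⟨f, hf, hW⟩ := hsat
  refine ⟨f, fun j => Finset.mem_inter.mpr ⟨(Finset.mem_inter.mp (hf j)).1, ?_⟩, hW⟩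
  obtain ⟨hfP, hfD⟩ := Finset.mem_inter.mp (hf j)
  refine (Finset.mem_insert.mp hfD).resolve_left fun hfj => ht j ?_
  exact Finset.mem_filter.mpr ⟨hfj ▸ hfP, f, hfj, fun l => (Finset.mem_inter.mp (hf l)).1, hW⟩

theorem mem_of_isSRepair_of_forall_not_mem_Rset {P : Fin k → Finset α}
    {W : (Fin k → α) → Prop} {t : α} (htD : t ∈ DB P) (ht : ∀ i, t ∉ Rset P W i)
    {D' : Finset α} (hD' : IsSRepair P W D') : t ∈ D' := by
  by_contra htD'
  have hins : Sat P W (insert t D') :=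
    hD'.2.2 _ (Finset.insert_subset htD hD'.1) (Finset.ssubset_insert htD')
  exact hD'.2.1 (sat_of_sat_insert ht hins)

theorem stmt8_general (hk : 1 ≤ k) (P : Fin k → Finset α)
    (hdisj : ∀ i j : Fin k, i ≠ j → Disjoint (P i) (P j))
    (W : (Fin k → α) → Prop) :
    Core P W =
      Finset.univ.inf' (Finset.univ_nonempty_iff.mpr ⟨⟨0, hk⟩⟩)
        (fun i => DB P \ Rset P W i) := by
  ext t
  simp only [Core, Finset.mem_filter, Finset.mem_inf', Finset.mem_univ, forall_const,
    Finset.mem_sdiff]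
  constructor
  · rintro ⟨htD, hcore⟩ i
    refine ⟨htD, fun htR => ?_⟩
    obtain ⟨D', hD', htD'⟩ := exists_isSRepair_not_mem_of_mem_Rset hdisj htR
    exact htD' (hcore D' hD')
  · intro h
    have htD : t ∈ DB P := (h ⟨0, hk⟩).1
    exact ⟨htD, fun D' => mem_of_isSRepair_of_forall_not_mem_Rset htD (fun i => (h i).2)⟩

theorem stmt8 (hk : 1 ≤ k) (P : Fin k → Finset α)
    (hdisj : ∀ i j : Fin k, i ≠ j → Disjoint (P i) (P j))
    (W : (Fin k → α) → Prop) (hD : Sat P W (DB P)) :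
    Core P W =
      Finset.univ.inf' (Finset.univ_nonempty_iff.mpr ⟨⟨0, hk⟩⟩)
        (fun i => DB P \ Rset P W i) :=
  stmt8_general hk P hdisj W
end

section
/- With the relation extensions P₁, …, P_k pairwise disjoint, for every i ∈ {1,…,k} the set D ∖ Rᵢ is an S-repair of D w.r.t. the denial constraint ¬Q. -/
open Classical

variable {α : Type*} [DecidableEq α] {k : ℕ}

theorem stmt10 (hk : 1 ≤ k) (P : Fin k → Finset α)
    (hdisj : ∀ i j : Fin k, i ≠ j → Disjoint (P i) (P j))
    (W : (Fin k → α) → Prop) (hD : Sat P W (DB P)) (i : Fin k) :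
    IsSRepair P W (DB P \ Rset P W i) := by
  refine ⟨Finset.sdiff_subset, ?_, ?_⟩
  · rintro ⟨f, hf, hW⟩
    have hi := hf i
    simp only [Finset.mem_inter, Finset.mem_sdiff] at hi
    exact hi.2.2 (Finset.mem_filter.mpr ⟨hi.1, f, rfl,
      fun j => ((Finset.mem_inter.mp (hf j)).1), hW⟩)
  · intro D'' hsub hss
    obtain ⟨t, htD, htn⟩ := Finset.exists_of_ssubset hss
    have htR : t ∈ Rset P W i := by
      by_contra h
      exact htn (Finset.mem_sdiff.mpr ⟨hsub htD, h⟩)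
    obtain ⟨htP, f, hfi, hfP, hW⟩ := Finset.mem_filter.mp htR
    refine ⟨f, fun j => Finset.mem_inter.mpr ⟨hfP j, ?_⟩, hW⟩
    by_cases hj : j = i
    · subst hj; rw [hfi]; exact htD
    · refine hss.1 (Finset.mem_sdiff.mpr ⟨?_, ?_⟩)
      · exact Finset.mem_biUnion.mpr ⟨j, Finset.mem_univ _, hfP j⟩
      · intro hmem
        have : f j ∈ P i := (Finset.mem_filter.mp hmem).1
        exact Finset.notMem_empty _ ((hdisj j i hj).le_bot (Finset.mem_inter.mpr ⟨hfP j, this⟩))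
end

section
/- With the relation extensions P₁, …, P_k pairwise disjoint, for every i ∈ {1,…,k} the set Rᵢ of tuples of Pᵢ participating in some witness of Q is a minimal necessary-set for Q in D. -/
open Classical

variable {α : Type*} [DecidableEq α] {k : ℕ}

theorem stmt12 (hk : 1 ≤ k) (P : Fin k → Finset α)
    (hdisj : ∀ i j : Fin k, i ≠ j → Disjoint (P i) (P j))
    (W : (Fin k → α) → Prop) (hD : Sat P W (DB P)) (i : Fin k) :
    MNS P W (Rset P W i) := by
  have hRsub : Rset P W i ⊆ P i := Finset.filter_subset _ _
  have hPDB : ∀ j : Fin k, P j ⊆ DB P := fun j t ht =>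
    Finset.mem_biUnion.mpr ⟨j, Finset.mem_univ j, ht⟩
  constructor
  · refine ⟨hRsub.trans (hPDB i), ?_⟩
    rintro ⟨f, hf, hW⟩
    have hfi := hf i
    rw [Finset.mem_inter, Finset.mem_sdiff] at hfi
    exact hfi.2.2 (Finset.mem_filter.mpr ⟨hfi.1,
      f, rfl, fun j => (Finset.mem_inter.mp (hf j)).1, hW⟩)
  · rintro N' hN' ⟨hN'sub, hnsat⟩
    obtain ⟨t, htR, htN⟩ := Finset.exists_of_ssubset hN'
    obtain ⟨htP, f, hfi, hfj, hW⟩ := Finset.mem_filter.mp htR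
    apply hnsat
    refine ⟨f, fun j => Finset.mem_inter.mpr ⟨hfj j, Finset.mem_sdiff.mpr ⟨hPDB j (hfj j), ?_⟩⟩, hW⟩
    intro hmem
    by_cases hji : j = i
    · subst hji; rw [hfi] at hmem; exact htN hmem
    · have : f j ∈ P i := hRsub (hN'.subset hmem)
      exact absurd ((hdisj j i hji).le_bot (Finset.mem_inter.mpr ⟨hfj j, this⟩)) (Finset.notMem_empty _)
end

section
/- With the relation extensions P₁, …, P_k pairwise disjoint, let D' be an S-repair of D w.r.t. the denial constraint ¬Q and let t ∈ D ∖ D'. Then there exists a minimal sufficient-set S for Q with t ∈ S, S ⊆ (D' ∖ Core(D)) ∪ {t}, and |S| ≤ k. -/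
open Classical

variable {α : Type*} [DecidableEq α] {k : ℕ}

lemma sat_mono {α : Type*} [DecidableEq α] {k : ℕ} {P : Fin k → Finset α}
    {W : (Fin k → α) → Prop} {A B : Finset α} (h : Sat P W A) (hAB : A ⊆ B) :
    Sat P W B := by
  obtain ⟨f, hf, hW⟩ := h
  exact ⟨f, fun i => Finset.mem_inter.mpr
    ⟨(Finset.mem_inter.mp (hf i)).1, hAB (Finset.mem_inter.mp (hf i)).2⟩, hW⟩

theorem stmt14 (hk : 1 ≤ k) (P : Fin k → Finset α)
    (hdisj : ∀ i j : Fin k, i ≠ j → Disjoint (P i) (P j))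
    (W : (Fin k → α) → Prop) (hD : Sat P W (DB P))
    (D' : Finset α) (hrep : IsSRepair P W D') (t : α) (ht : t ∈ DB P \ D') :
    ∃ S : Finset α, MSSuff P W S ∧ t ∈ S ∧
      S ⊆ (D' \ Core P W) ∪ {t} ∧ S.card ≤ k := by
  classical
  obtain ⟨htD, htD'⟩ := Finset.mem_sdiff.mp ht
  obtain ⟨hsub, hnsat, hmax⟩ := hrep
  have hins : insert t D' ⊆ DB P := by
    intro x hx
    rcases Finset.mem_insert.mp hx with rfl | hx
    · exact htD
    · exact hsub hx
  have hsat1 : Sat P W (insert t D') := hmax _ hins (Finset.ssubset_insert htD')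
  obtain ⟨f, hf, hW⟩ := hsat1
  set S₀ : Finset α := Finset.image f Finset.univ with hS₀
  have hS₀sat : Sat P W S₀ :=
    ⟨f, fun i => Finset.mem_inter.mpr ⟨(Finset.mem_inter.mp (hf i)).1,
      Finset.mem_image.mpr ⟨i, Finset.mem_univ i, rfl⟩⟩, hW⟩
  have hS₀sub : S₀ ⊆ insert t D' := by
    intro x hx
    obtain ⟨i, -, rfl⟩ := Finset.mem_image.mp hx
    exact (Finset.mem_inter.mp (hf i)).2
  -- minimal-cardinality sufficient subset of S₀
  have hne : (S₀.powerset.filter fun S => Sat P W S).Nonempty :=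
    ⟨S₀, by simp [hS₀sat]⟩
  obtain ⟨S, hSmem, hSmin⟩ := Finset.exists_min_image _ Finset.card hne
  rw [Finset.mem_filter, Finset.mem_powerset] at hSmem
  obtain ⟨hSsub, hSsat⟩ := hSmem
  have hSins : S ⊆ insert t D' := hSsub.trans hS₀sub
  have hSD : S ⊆ DB P := hSins.trans hins
  have hminsub : ∀ S', S' ⊆ S₀ → Sat P W S' → S.card ≤ S'.card := by
    intro S' h1 h2
    exact hSmin S' (by rw [Finset.mem_filter, Finset.mem_powerset]; exact ⟨h1, h2⟩)
  have hMSS : MSSuff P W S := by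
    refine ⟨⟨hSD, hSsat⟩, ?_⟩
    intro S' hS' hSuff
    have := hminsub S' (hS'.subset.trans hSsub) hSuff.2
    exact absurd this (not_le.mpr (Finset.card_lt_card hS'))
  have htS : t ∈ S := by
    by_contra htS
    have : S ⊆ D' := by
      intro x hx
      rcases Finset.mem_insert.mp (hSins hx) with rfl | h
      · exact absurd hx htS
      · exact h
    exact hnsat (sat_mono hSsat this)
  -- witness of S covers S
  obtain ⟨g, hg, hgW⟩ := hSsat
  have hgS : ∀ i, g i ∈ S := fun i => (Finset.mem_inter.mp (hg i)).2
  have hgP : ∀ i, g i ∈ P i := fun i => (Finset.mem_inter.mp (hg i)).1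
  have himg : Finset.image g Finset.univ = S := by
    have h1 : Finset.image g Finset.univ ⊆ S := by
      intro x hx; obtain ⟨i, -, rfl⟩ := Finset.mem_image.mp hx; exact hgS i
    by_contra hneq
    have hss : Finset.image g Finset.univ ⊂ S := h1.ssubset_of_ne hneq
    have hsat' : Sat P W (Finset.image g Finset.univ) :=
      ⟨g, fun i => Finset.mem_inter.mpr ⟨hgP i,
        Finset.mem_image.mpr ⟨i, Finset.mem_univ i, rfl⟩⟩, hgW⟩
    exact hMSS.2 _ hss ⟨h1.trans hSD, hsat'⟩
  refine ⟨S, hMSS, htS, ?_, ?_⟩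
  · intro s hs
    rcases eq_or_ne s t with rfl | hst
    · exact Finset.mem_union_right _ (Finset.mem_singleton_self s)
    · have hsD' : s ∈ D' := by
        rcases Finset.mem_insert.mp (hSins hs) with rfl | h
        · exact absurd rfl hst
        · exact h
      -- s = g i for some i
      obtain ⟨i, -, hi⟩ := Finset.mem_image.mp (himg ▸ hs)
      -- F := S.erase s is not satisfying
      have hFnsat : ¬ Sat P W (S.erase s) := by
        rintro ⟨h, hh, -⟩
        have hhi := Finset.mem_inter.mp (hh i)
        have hmem : h i ∈ S.erase s := hhi.2
        have hne' : h i ≠ s := (Finset.mem_erase.mp hmem).1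
        obtain ⟨j, -, hj⟩ := Finset.mem_image.mp (himg ▸ (Finset.mem_erase.mp hmem).2)
        have hij : j ≠ i := by rintro rfl; exact hne' (hj.symm ▸ hi ▸ rfl)
        exact Finset.disjoint_left.mp (hdisj j i hij) (hj ▸ hgP j) hhi.1
      have hFsub : S.erase s ⊆ (DB P).erase s := by
        intro x hx
        exact Finset.mem_erase.mpr ⟨(Finset.mem_erase.mp hx).1, hSD (Finset.mem_erase.mp hx).2⟩
      -- maximal non-sat E with S.erase s ⊆ E ⊆ (DB P).erase s
      have hEne : (((DB P).erase s).powerset.filter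
          (fun E => S.erase s ⊆ E ∧ ¬ Sat P W E)).Nonempty :=
        ⟨S.erase s, by
          rw [Finset.mem_filter, Finset.mem_powerset]
          exact ⟨hFsub, Finset.Subset.refl _, hFnsat⟩⟩
      obtain ⟨E, hEmem, hEmax⟩ := Finset.exists_max_image _ Finset.card hEne
      rw [Finset.mem_filter, Finset.mem_powerset] at hEmem
      obtain ⟨hEsub, hFE, hEnsat⟩ := hEmem
      have hsE : s ∉ E := fun h => (Finset.mem_erase.mp (hEsub h)).1 rfl
      have hErep : IsSRepair P W E := by
        refine ⟨hEsub.trans (Finset.erase_subset _ _), hEnsat, ?_⟩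
        intro D'' hD'' hED''
        obtain ⟨u, huD'', huE⟩ := Finset.exists_of_ssubset hED''
        rcases eq_or_ne u s with rfl | hus
        · -- Sat (insert u E) via g, since S ⊆ insert s (S.erase s) ⊆ insert s E
          have : Sat P W (insert u E) := by
            refine ⟨g, fun j => Finset.mem_inter.mpr ⟨hgP j, ?_⟩, hgW⟩
            rcases eq_or_ne (g j) u with h | h
            · exact Finset.mem_insert.mpr (Or.inl h)
            · exact Finset.mem_insert.mpr (Or.inr (hFE (Finset.mem_erase.mpr ⟨h, hgS j⟩)))
          exact sat_mono this (Finset.insert_subset huD'' hED''.subset)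
        · have huDB : u ∈ (DB P).erase s := Finset.mem_erase.mpr ⟨hus, hD'' huD''⟩
          have : Sat P W (insert u E) := by
            by_contra hns
            have hmem : insert u E ∈ ((DB P).erase s).powerset.filter
                (fun E => S.erase s ⊆ E ∧ ¬ Sat P W E) := by
              rw [Finset.mem_filter, Finset.mem_powerset]
              exact ⟨Finset.insert_subset huDB hEsub,
                hFE.trans (Finset.subset_insert _ _), hns⟩
            have := hEmax _ hmem
            have hlt : E.card < (insert u E).card := by
              rw [Finset.card_insert_of_notMem huE]; omega
            omega
          exact sat_mono this (Finset.insert_subset huD'' hED''.subset)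
      have hsCore : s ∉ Core P W := by
        intro h
        have := (Finset.mem_filter.mp h).2 E hErep
        exact hsE this
      exact Finset.mem_union_left _ (Finset.mem_sdiff.mpr ⟨hsD', hsCore⟩)
  · calc S.card ≤ S₀.card := Finset.card_le_card hSsub
      _ ≤ (Finset.univ : Finset (Fin k)).card := Finset.card_image_le
      _ = k := by simp
end
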